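/- arXiv:1902.00920 — 6 statements merged into one kernel-verified Lean document; each statement's English description precedes it below -/
import Mathlib

section
/- Let M : ℕ × ℕ → ℂ be an infinite matrix all of whose rows and all of whose columns are square-summable. Then M defines a bounded operator on ℓ²(ℕ) if and only if sup_{n∈ℕ} ‖Pₙ (M*M) Pₙ‖ < ∞, where M*M is the infinite matrix with entries (M*M)_{jk} = ∑_l conj(M_{lj}) M_{lk} (these series converge absolutely by Cauchy–Schwarz). Moreover, when M defines a bounded operator T on ℓ²(ℕ), one has sup_{n∈ℕ} ‖Pₙ (M*M) Pₙ‖ = ‖T‖². -/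
open Filter Topology

noncomputable section

/-- `M` defines the bounded operator `T` on `ℓ²(ℕ)`: for every `x ∈ ℓ²(ℕ)` and every `j`,
`(T x)(j) = ∑_k M(j,k) x(k)`, the series converging absolutely. -/
def RepresentsMatrix (M : ℕ → ℕ → ℂ)
    (T : lp (fun _ : ℕ => ℂ) 2 →L[ℂ] lp (fun _ : ℕ => ℂ) 2) : Prop :=
  ∀ (x : lp (fun _ : ℕ => ℂ) 2) (j : ℕ),
    Summable (fun k => ‖M j k * x k‖) ∧ T x j = ∑' k, M j k * x k

/-- The operator norm `‖Pₙ A Pₙ‖` of the compression of the infinite matrix `A` to the span of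
`e_0, …, e_n`, computed as the operator norm of the corresponding `(n+1) × (n+1)` matrix acting
on Euclidean space. -/
def truncNorm (A : ℕ → ℕ → ℂ) (n : ℕ) : ℝ :=
  ‖Matrix.toEuclideanCLM (𝕜 := ℂ) (Matrix.of fun i j : Fin (n + 1) => A i j)‖

/-- The infinite matrix `M*M`, with entries `(M*M)_{jk} = ∑_l conj(M_{lj}) M_{lk}`. -/
def adjMulMatrix (M : ℕ → ℕ → ℂ) : ℕ → ℕ → ℂ :=
  fun j k => ∑' l, (starRingEnd ℂ) (M l j) * M l k

/-!
Let `Sₙ : ℂⁿ⁺¹ → ℓ²` send `y` to `∑ₖ yₖ • (column k of M)`. The matrix of `Sₙ* Sₙ` is the Gram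
matrix of the first `n + 1` columns, which is `Pₙ (M*M) Pₙ`; by the C*-identity its norm is
`‖Sₙ‖²`. If `T` represents `M`, then `Sₙ` is `T` composed with the isometric inclusion of `ℂⁿ⁺¹`
along the unit vectors, so `‖Sₙ‖ ≤ ‖T‖`. Conversely, if `‖Sₙ‖ ≤ D` for all `n`, then for
`x ∈ ℓ²` the vectors `Sₙ (x₀, …, xₙ)` have norm at most `D ‖x‖` and converge coordinatewise to
`(∑ₖ M j k * x k)ⱼ`; passing to the limit in finite partial sums of squares shows that this
sequence lies in `ℓ²` with norm at most `D ‖x‖`. With `D = sup ‖Sₙ‖` this yields a representing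
operator, and bounds the norm of every representing operator by `D`.
-/

section EuclideanCombination

variable {ι 𝕜 E : Type*} [Fintype ι] [RCLike 𝕜] [NormedAddCommGroup E] [InnerProductSpace 𝕜 E]

def euclideanCombination (v : ι → E) : EuclideanSpace 𝕜 ι →L[𝕜] E :=
  LinearMap.toContinuousLinearMap
    ((Fintype.linearCombination 𝕜 v).comp (WithLp.linearEquiv 2 𝕜 (ι → 𝕜)).toLinearMap)

@[simp]
lemma euclideanCombination_apply (v : ι → E) (y : EuclideanSpace 𝕜 ι) :
    euclideanCombination v y = ∑ i, y i • v i := rfl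

variable [DecidableEq ι] [CompleteSpace E]

lemma toEuclideanCLM_gram (v : ι → E) :
    Matrix.toEuclideanCLM (𝕜 := 𝕜) (Matrix.gram 𝕜 v) =
      ContinuousLinearMap.adjoint (euclideanCombination v) ∘L euclideanCombination v := by
  refine ContinuousLinearMap.ext fun y => ext_inner_left 𝕜 fun w => ?_
  rw [ContinuousLinearMap.comp_apply, ContinuousLinearMap.adjoint_inner_right,
    euclideanCombination_apply, euclideanCombination_apply, ← Matrix.star_dotProduct_gram_mulVec]
  simp [EuclideanSpace.inner_eq_star_dotProduct, dotProduct_comm]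

lemma norm_toEuclideanCLM_gram (v : ι → E) :
    ‖Matrix.toEuclideanCLM (𝕜 := 𝕜) (Matrix.gram 𝕜 v)‖ =
      ‖euclideanCombination (𝕜 := 𝕜) v‖ ^ 2 := by
  rw [toEuclideanCLM_gram, ContinuousLinearMap.norm_adjoint_comp_self, sq]

lemma Orthonormal.norm_euclideanCombination_le_one {v : ι → E} (hv : Orthonormal 𝕜 v) :
    ‖euclideanCombination (𝕜 := 𝕜) v‖ ≤ 1 := by
  have hgram : Matrix.gram 𝕜 v = 1 := by
    ext i j
    simp [orthonormal_iff_ite.1 hv, Matrix.one_apply]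
  have h := norm_toEuclideanCLM_gram (𝕜 := 𝕜) v
  rw [hgram, map_one] at h
  refine (pow_le_one_iff_of_nonneg (norm_nonneg _) two_ne_zero).1 ?_
  exact h ▸ ContinuousLinearMap.norm_id_le

end EuclideanCombination

section LpTwo

variable {α : Type*} {E : α → Type*} [∀ i, NormedAddCommGroup (E i)]

lemma memℓp_two_iff {f : ∀ i, E i} : Memℓp f 2 ↔ Summable fun i => ‖f i‖ ^ 2 := by
  rw [memℓp_gen_iff (by norm_num)]
  simp only [ENNReal.toReal_ofNat, Real.rpow_two]

lemma lp.sum_norm_sq_le_norm_sq (f : lp E 2) (s : Finset α) :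
    ∑ i ∈ s, ‖f i‖ ^ 2 ≤ ‖f‖ ^ 2 := by
  simpa only [ENNReal.toReal_ofNat, Real.rpow_two] using
    lp.sum_rpow_le_norm_rpow (by norm_num) f s

lemma lp.norm_le_of_forall_sum_norm_sq_le {C : ℝ} (hC : 0 ≤ C) {f : lp E 2}
    (hf : ∀ s : Finset α, ∑ i ∈ s, ‖f i‖ ^ 2 ≤ C ^ 2) : ‖f‖ ≤ C :=
  lp.norm_le_of_forall_sum_le (by norm_num) hC <| by
    simpa only [ENNReal.toReal_ofNat, Real.rpow_two] using hf

lemma lp.summable_norm_mul {𝕜 : Type*} [RCLike 𝕜] (f g : lp (fun _ : α => 𝕜) 2) :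
    Summable fun i => ‖f i * g i‖ := by
  simpa only [norm_mul] using
    lp.summable_mul (by simpa using Real.HolderConjugate.two_two) f g

lemma lp.orthonormal_single {𝕜 : Type*} [RCLike 𝕜] [DecidableEq α] :
    Orthonormal 𝕜 fun i => lp.single (E := fun _ : α => 𝕜) 2 i 1 := by
  refine orthonormal_iff_ite.2 fun i j => ?_
  simp [lp.inner_single_left, Pi.single_apply]

end LpTwo

local notation "ℓ²" => lp (fun _ : ℕ => ℂ) 2

section InfiniteMatrix

variable {M : ℕ → ℕ → ℂ}

def col (hcol : ∀ k, Summable fun j => ‖M j k‖ ^ 2) (k : ℕ) : ℓ² :=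
  ⟨fun j => M j k, memℓp_two_iff.2 (hcol k)⟩

def row (hrow : ∀ j, Summable fun k => ‖M j k‖ ^ 2) (j : ℕ) : ℓ² :=
  ⟨fun k => M j k, memℓp_two_iff.2 (hrow j)⟩

def truncCols (hcol : ∀ k, Summable fun j => ‖M j k‖ ^ 2) (n : ℕ) :
    EuclideanSpace ℂ (Fin (n + 1)) →L[ℂ] ℓ² :=
  euclideanCombination fun k : Fin (n + 1) => col hcol k

lemma truncCols_apply_apply (hcol : ∀ k, Summable fun j => ‖M j k‖ ^ 2) (n : ℕ)
    (y : EuclideanSpace ℂ (Fin (n + 1))) (j : ℕ) :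
    truncCols hcol n y j = ∑ k : Fin (n + 1), M j k * y k := by
  rw [truncCols, euclideanCombination_apply, lp.coeFn_sum, Finset.sum_apply]
  simp [col, mul_comm]

lemma truncNorm_adjMulMatrix (hcol : ∀ k, Summable fun j => ‖M j k‖ ^ 2) (n : ℕ) :
    truncNorm (adjMulMatrix M) n = ‖truncCols hcol n‖ ^ 2 := by
  have hgram : (Matrix.of fun i j : Fin (n + 1) => adjMulMatrix M i j) =
      Matrix.gram ℂ fun k : Fin (n + 1) => col hcol k := by
    ext i j
    simp [lp.inner_eq_tsum, adjMulMatrix, col, mul_comm]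
  rw [truncNorm, hgram, norm_toEuclideanCLM_gram, truncCols]

variable {T : ℓ² →L[ℂ] ℓ²}

lemma RepresentsMatrix.apply_single (hT : RepresentsMatrix M T)
    (hcol : ∀ k, Summable fun j => ‖M j k‖ ^ 2) (k : ℕ) :
    T (lp.single 2 k 1) = col hcol k := by
  ext j
  rw [(hT _ j).2, tsum_eq_single k fun l hl => by simp [lp.single_apply, hl]]
  simp [col]

lemma RepresentsMatrix.comp_euclideanCombination_single (hT : RepresentsMatrix M T)
    (hcol : ∀ k, Summable fun j => ‖M j k‖ ^ 2) (n : ℕ) :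
    T ∘L euclideanCombination (fun k : Fin (n + 1) => lp.single (E := fun _ : ℕ => ℂ) 2 k 1) =
      truncCols hcol n := by
  ext1 y
  simp [truncCols, map_sum, hT.apply_single hcol]

lemma RepresentsMatrix.norm_truncCols_le (hT : RepresentsMatrix M T)
    (hcol : ∀ k, Summable fun j => ‖M j k‖ ^ 2) (n : ℕ) :
    ‖truncCols hcol n‖ ≤ ‖T‖ := by
  rw [← hT.comp_euclideanCombination_single hcol n]
  have hsingle : Orthonormal ℂ fun k : Fin (n + 1) => lp.single (E := fun _ : ℕ => ℂ) 2 k 1 :=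
    lp.orthonormal_single.comp _ Fin.val_injective
  exact (T.opNorm_comp_le _).trans
    (mul_le_of_le_one_right (norm_nonneg T) hsingle.norm_euclideanCombination_le_one)

lemma RepresentsMatrix.truncNorm_le (hT : RepresentsMatrix M T)
    (hcol : ∀ k, Summable fun j => ‖M j k‖ ^ 2) (n : ℕ) :
    truncNorm (adjMulMatrix M) n ≤ ‖T‖ ^ 2 := by
  rw [truncNorm_adjMulMatrix hcol]
  exact pow_le_pow_left₀ (norm_nonneg _) (hT.norm_truncCols_le hcol n) 2

end InfiniteMatrix

section BoundedTruncations

variable {M : ℕ → ℕ → ℂ}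

def firstCoords (n : ℕ) (x : ℓ²) : EuclideanSpace ℂ (Fin (n + 1)) :=
  WithLp.toLp 2 fun k => x k

lemma norm_firstCoords_le (n : ℕ) (x : ℓ²) : ‖firstCoords n x‖ ≤ ‖x‖ := by
  rw [EuclideanSpace.norm_eq, Real.sqrt_le_left (norm_nonneg x)]
  simpa [firstCoords, Fin.sum_univ_eq_sum_range (fun k => ‖x k‖ ^ 2)]
    using lp.sum_norm_sq_le_norm_sq x (Finset.range (n + 1))

lemma summable_norm_row_mul (hrow : ∀ j, Summable fun k => ‖M j k‖ ^ 2) (x : ℓ²) (j : ℕ) :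
    Summable fun k => ‖M j k * x k‖ :=
  lp.summable_norm_mul (row hrow j) x

lemma tendsto_truncCols_firstCoords_apply (hrow : ∀ j, Summable fun k => ‖M j k‖ ^ 2)
    (hcol : ∀ k, Summable fun j => ‖M j k‖ ^ 2) (x : ℓ²) (j : ℕ) :
    Tendsto (fun n => truncCols hcol n (firstCoords n x) j) atTop (𝓝 (∑' k, M j k * x k)) := by
  simp_rw [truncCols_apply_apply, firstCoords, Fin.sum_univ_eq_sum_range (fun k => M j k * x k)]
  exact (summable_norm_row_mul hrow x j).of_norm.hasSum.tendsto_sum_nat.comp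
    (tendsto_add_atTop_nat 1)

variable {hcol : ∀ k, Summable fun j => ‖M j k‖ ^ 2} {D : ℝ}

lemma sum_norm_sq_tsum_mul_le (hrow : ∀ j, Summable fun k => ‖M j k‖ ^ 2)
    (hD : ∀ n, ‖truncCols hcol n‖ ≤ D) (x : ℓ²) (s : Finset ℕ) :
    ∑ j ∈ s, ‖∑' k, M j k * x k‖ ^ 2 ≤ (D * ‖x‖) ^ 2 := by
  refine le_of_tendsto (tendsto_finsetSum s fun j _ =>
    (tendsto_truncCols_firstCoords_apply hrow hcol x j).norm.pow 2)
    (Eventually.of_forall fun n => ?_)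
  calc ∑ j ∈ s, ‖truncCols hcol n (firstCoords n x) j‖ ^ 2
      ≤ ‖truncCols hcol n (firstCoords n x)‖ ^ 2 := lp.sum_norm_sq_le_norm_sq _ s
    _ ≤ (D * ‖x‖) ^ 2 := by
      gcongr
      exact (truncCols hcol n).le_of_opNorm_le_of_le (hD n) (norm_firstCoords_le n x)

lemma norm_le_of_forall_apply_eq_tsum_mul (hrow : ∀ j, Summable fun k => ‖M j k‖ ^ 2)
    (hD : ∀ n, ‖truncCols hcol n‖ ≤ D) {x f : ℓ²} (hf : ∀ j, f j = ∑' k, M j k * x k) :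
    ‖f‖ ≤ D * ‖x‖ :=
  lp.norm_le_of_forall_sum_norm_sq_le
    (mul_nonneg ((norm_nonneg _).trans (hD 0)) (norm_nonneg x))
    fun s => by simpa only [hf] using sum_norm_sq_tsum_mul_le hrow hD x s

lemma RepresentsMatrix.norm_le {T : ℓ² →L[ℂ] ℓ²} (hT : RepresentsMatrix M T)
    (hrow : ∀ j, Summable fun k => ‖M j k‖ ^ 2) (hD : ∀ n, ‖truncCols hcol n‖ ≤ D) :
    ‖T‖ ≤ D :=
  T.opNorm_le_bound ((norm_nonneg _).trans (hD 0)) fun x =>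
    norm_le_of_forall_apply_eq_tsum_mul hrow hD fun j => (hT x j).2

def matrixLinearMap (hrow : ∀ j, Summable fun k => ‖M j k‖ ^ 2)
    (hD : ∀ n, ‖truncCols hcol n‖ ≤ D) : ℓ² →ₗ[ℂ] ℓ² where
  toFun x := ⟨fun j => ∑' k, M j k * x k, memℓp_two_iff.2 <|
    summable_of_sum_le (fun _ => sq_nonneg _) (sum_norm_sq_tsum_mul_le hrow hD x)⟩
  map_add' x y := by
    ext j
    simp only [lp.coeFn_add, Pi.add_apply, mul_add]
    exact (summable_norm_row_mul hrow x j).of_norm.tsum_add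
      (summable_norm_row_mul hrow y j).of_norm
  map_smul' c x := by
    ext j
    simp only [lp.coeFn_smul, Pi.smul_apply, smul_eq_mul, RingHom.id_apply, ← tsum_mul_left]
    exact tsum_congr fun k => mul_left_comm _ _ _

def matrixCLM (hrow : ∀ j, Summable fun k => ‖M j k‖ ^ 2)
    (hD : ∀ n, ‖truncCols hcol n‖ ≤ D) : ℓ² →L[ℂ] ℓ² :=
  (matrixLinearMap hrow hD).mkContinuous D fun _ =>
    norm_le_of_forall_apply_eq_tsum_mul hrow hD fun _ => rfl

lemma representsMatrix_matrixCLM (hrow : ∀ j, Summable fun k => ‖M j k‖ ^ 2)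
    (hD : ∀ n, ‖truncCols hcol n‖ ≤ D) : RepresentsMatrix M (matrixCLM hrow hD) :=
  fun x j => ⟨summable_norm_row_mul hrow x j, rfl⟩

end BoundedTruncations

/-- Crone's Lemma (Lemma 5.2): an infinite matrix with square-summable rows and columns defines a
bounded operator on `ℓ²(ℕ)` iff `sup_n ‖Pₙ (M*M) Pₙ‖ < ∞`, and in that case
`sup_n ‖Pₙ (M*M) Pₙ‖ = ‖T‖²`. -/
theorem crone_lemma (M : ℕ → ℕ → ℂ)
    (hrow : ∀ j, Summable fun k => ‖M j k‖ ^ 2)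
    (hcol : ∀ k, Summable fun j => ‖M j k‖ ^ 2) :
    ((∃ T, RepresentsMatrix M T) ↔
        BddAbove (Set.range fun n => truncNorm (adjMulMatrix M) n)) ∧
      ∀ T, RepresentsMatrix M T → (⨆ n, truncNorm (adjMulMatrix M) n) = ‖T‖ ^ 2 := by
  have hbdd {T} (hT : RepresentsMatrix M T) :
      BddAbove (Set.range fun n => truncNorm (adjMulMatrix M) n) :=
    ⟨‖T‖ ^ 2, Set.forall_mem_range.2 (hT.truncNorm_le hcol)⟩
  have hsqrt (hb : BddAbove (Set.range fun n => truncNorm (adjMulMatrix M) n)) (n : ℕ) :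
      ‖truncCols hcol n‖ ≤ √(⨆ n, truncNorm (adjMulMatrix M) n) :=
    Real.le_sqrt_of_sq_le (truncNorm_adjMulMatrix hcol n ▸ le_ciSup hb n)
  refine ⟨⟨fun ⟨T, hT⟩ => hbdd hT, fun hb => ⟨_, representsMatrix_matrixCLM hrow (hsqrt hb)⟩⟩,
    fun T hT => le_antisymm (ciSup_le (hT.truncNorm_le hcol)) ?_⟩
  have hC : 0 ≤ ⨆ n, truncNorm (adjMulMatrix M) n := Real.iSup_nonneg fun n => norm_nonneg _
  exact (Real.le_sqrt (norm_nonneg T) hC).1 (hT.norm_le hrow (hsqrt (hbdd hT)))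
end
end

section
/- Let M : ℕ × ℕ → ℂ be an infinite matrix such that M_{kk} ≠ 0 for all k and δ := inf_k |M_{kk}| > 0. Let G be the infinite matrix with entries G_{jk} = M_{jk}/M_{kk} for j ≠ k and G_{jj} = 0 (so G is the matrix F D⁻¹, where D is the diagonal part and F the off-diagonal part of M). Assume that G defines a bounded operator on ℓ²(ℕ) and that I + G is invertible in the Banach algebra of bounded operators on ℓ²(ℕ). Let D be the (generally unbounded) diagonal operator D x = (M_{kk} x_k)_k with domain Dom(D) = { x ∈ ℓ²(ℕ) : (M_{kk} x_k)_k ∈ ℓ²(ℕ) }, and let L : Dom(D) → ℓ²(ℕ) be the linear map L x = (I + G)(D x). Then: (a) Dom(D) is dense in ℓ²(ℕ); (b) L is a bijection from Dom(D) onto ℓ²(ℕ) whose inverse is the bounded operator R = D′ ∘ (I + G)⁻¹, where D′ is the bounded diagonal operator with entries 1/M_{kk}; (c) if moreover |M_{kk}| → ∞ as k → ∞, then R is a compact operator on ℓ²(ℕ). -/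
open Filter Topology

noncomputable section

/-!
The inverse of `L = (1 + G) ∘ D` is `D⁻¹ ∘ (1 + G)⁻¹`, where `D⁻¹` is multiplication by the
sequence `(M k k)⁻¹`, bounded by `δ⁻¹`. The multiplication operator depends continuously on its
symbol in `ℓ^∞`, and multiplication by a unit vector has rank one; since the compact operators form
a closed subspace, multiplication by any symbol tending to zero is compact, which gives (c). The
domain of `D` contains the finitely supported sequences, hence is dense.
-/

open scoped ENNReal

namespace lp

section Single

variable {α : Type*} {E : α → Type*} [∀ i, NormedAddCommGroup (E i)] [DecidableEq α]

theorem sum_single_apply (p : ℝ≥0∞) (f : ∀ i, E i) (s : Finset α) (j : α) :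
    (∑ i ∈ s, lp.single p i (f i)) j = if j ∈ s then f j else 0 := by
  rw [lp.coeFn_sum, Finset.sum_apply]
  exact Finset.sum_pi_single j f s

theorem hasSum_single_of_tendsto_norm_zero {f : lp E ∞}
    (hf : Tendsto (fun i => ‖f i‖) cofinite (𝓝 0)) :
    HasSum (fun i => lp.single ∞ i (f i)) f := by
  refine Metric.tendsto_nhds.2 fun ε hε => ?_
  have hsmall : {i | ε / 2 ≤ ‖f i‖}.Finite := by
    simpa using eventually_cofinite.1 (hf.eventually (gt_mem_nhds (half_pos hε)))
  filter_upwards [eventually_ge_atTop hsmall.toFinset] with s hs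
  rw [dist_eq_norm]
  refine (norm_le_of_forall_le (half_pos hε).le fun i => ?_).trans_lt (half_lt_self hε)
  rw [lp.coeFn_sub, Pi.sub_apply, sum_single_apply]
  by_cases hi : i ∈ s
  · simpa [hi] using (half_pos hε).le
  · have : ‖f i‖ < ε / 2 := not_le.1 fun h => hi (hs (hsmall.mem_toFinset.2 h))
    simpa [hi] using this.le

end Single

variable {α : Type*} (𝕜 : Type*) [RCLike 𝕜] {p : ℝ≥0∞}

theorem dense_setOf_memℓp_mul (hp : p ≠ ∞) [Fact (1 ≤ p)] (a : α → 𝕜) :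
    Dense {x : lp (fun _ : α => 𝕜) p | Memℓp (fun i => a i * x i) p} := by
  classical
  intro x
  refine mem_closure_of_tendsto (lp.hasSum_single hp x) (Eventually.of_forall fun s => ?_)
  refine (memℓp_zero (s.finite_toSet.subset fun i hi => ?_)).of_exponent_ge zero_le
  refine Finset.mem_coe.2 (by_contra fun hs => hi ?_)
  rw [sum_single_apply, if_neg hs, mul_zero]

variable (p) [Fact (1 ≤ p)]

def diagL :
    lp (fun _ : α => 𝕜) ∞ →L[𝕜] lp (fun _ : α => 𝕜) p →L[𝕜] lp (fun _ : α => 𝕜) p :=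
  holderL (K := 1) p (fun _ => ContinuousLinearMap.mul 𝕜 𝕜) fun _ => by simp

@[simp] theorem diagL_apply_apply (a : lp (fun _ : α => 𝕜) ∞) (x : lp (fun _ : α => 𝕜) p)
    (i : α) : diagL 𝕜 p a x i = a i * x i := rfl

variable {𝕜}

theorem isCompactOperator_diagL_single [DecidableEq α] (i : α) (c : 𝕜) :
    IsCompactOperator (diagL 𝕜 p (lp.single ∞ i c)) := by
  let e : lp (fun _ : α => 𝕜) p →L[𝕜] 𝕜 := c • evalCLM 𝕜 _ p i
  have hrank_one : diagL 𝕜 p (lp.single ∞ i c) = (singleContinuousLinearMap 𝕜 _ p i).comp e := by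
    ext x j
    by_cases hj : j = i
    · subst hj; simp [e, evalCLM]
    · simp [hj]
  rw [hrank_one]
  exact (isCompactOperator_of_locallyCompactSpace_dom e).clm_comp
    (singleContinuousLinearMap 𝕜 (fun _ : α => 𝕜) p i)

theorem isCompactOperator_diagL {a : lp (fun _ : α => 𝕜) ∞}
    (ha : Tendsto (fun i => ‖a i‖) cofinite (𝓝 0)) : IsCompactOperator (diagL 𝕜 p a) := by
  classical
  let S := (compactOperator (RingHom.id 𝕜) (lp (fun _ : α => 𝕜) p) _).comap
    (diagL 𝕜 p).toLinearMap
  have hS : IsClosed (S : Set (lp (fun _ : α => 𝕜) ∞)) :=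
    isClosed_setOfPred_isCompactOperator.preimage (diagL 𝕜 p).continuous
  exact hS.mem_of_tendsto (hasSum_single_of_tendsto_norm_zero ha)
    (Eventually.of_forall fun s => S.sum_mem fun i _ => isCompactOperator_diagL_single p i (a i))

end lp

theorem diag_dominant_invertible_general (M : ℕ → ℕ → ℂ)
    (hne : ∀ k, M k k ≠ 0) (δ : ℝ) (hδ : 0 < δ) (hdiag : ∀ k, δ ≤ ‖M k k‖)
    (Gop : lp (fun _ : ℕ => ℂ) 2 →L[ℂ] lp (fun _ : ℕ => ℂ) 2)
    (hinv : IsUnit (1 + Gop)) :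
    -- (a) the domain of the diagonal operator `D` is dense
    Dense {x : lp (fun _ : ℕ => ℂ) 2 | Memℓp (fun k => M k k * x k) 2} ∧
    -- (b) `L = (I + Gop) ∘ D` is a bijection from `Dom(D)` onto `ℓ²(ℕ)` with bounded inverse
    --     `R = D′ ∘ (I + Gop)⁻¹`, where `D′` is the diagonal matrix with entries `1/M_{kk}`
    ∃ R : lp (fun _ : ℕ => ℂ) 2 →L[ℂ] lp (fun _ : ℕ => ℂ) 2,
      (∀ (y : lp (fun _ : ℕ => ℂ) 2) (k : ℕ),
        R y k = (M k k)⁻¹ * (Ring.inverse (1 + Gop) y) k) ∧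
      (∀ (x : lp (fun _ : ℕ => ℂ) 2) (hx : Memℓp (fun k => M k k * x k) 2),
        R ((1 + Gop) (⟨fun k => M k k * x k, hx⟩ : lp (fun _ : ℕ => ℂ) 2)) = x) ∧
      (∀ y : lp (fun _ : ℕ => ℂ) 2, ∃ hx : Memℓp (fun k => M k k * (R y) k) 2,
        (1 + Gop) (⟨fun k => M k k * (R y) k, hx⟩ : lp (fun _ : ℕ => ℂ) 2) = y) ∧
      -- (c) if `|M_{kk}| → ∞`, then `R` is a compact operator
      (Tendsto (fun k => ‖M k k‖) atTop atTop → IsCompactOperator ⇑R) := by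
  have hbdd : BddAbove (Set.range fun k => ‖(M k k)⁻¹‖) :=
    ⟨δ⁻¹, Set.forall_mem_range.2 fun k => by rw [norm_inv]; exact inv_anti₀ hδ (hdiag k)⟩
  let d : lp (fun _ : ℕ => ℂ) ∞ := ⟨fun k => (M k k)⁻¹, memℓp_infty hbdd⟩
  set N := Ring.inverse (1 + Gop)
  have hNleft (z) : N ((1 + Gop) z) = z := DFunLike.congr_fun (Ring.inverse_mul_cancel _ hinv) z
  have hNright (z) : (1 + Gop) (N z) = z := DFunLike.congr_fun (Ring.mul_inverse_cancel _ hinv) z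
  refine ⟨lp.dense_setOf_memℓp_mul ℂ ENNReal.ofNat_ne_top _, (lp.diagL ℂ 2 d).comp N,
    fun y k => rfl, fun x hx => ?_, fun y => ?_, fun hM => ?_⟩
  · ext k
    rw [ContinuousLinearMap.comp_apply, hNleft]
    exact inv_mul_cancel_left₀ (hne k) (x k)
  · have hD : (fun k => M k k * (lp.diagL ℂ 2 d (N y)) k) = N y :=
      funext fun k => mul_inv_cancel_left₀ (hne k) _
    exact ⟨hD ▸ lp.memℓp (N y), by convert hNright y using 2; exact Subtype.ext hD⟩
  · have hd : Tendsto (fun k => ‖(M k k)⁻¹‖) cofinite (𝓝 0) := by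
      rw [Nat.cofinite_eq_atTop]
      exact (funext fun k => norm_inv (M k k)) ▸ hM.inv_tendsto_atTop
    exact (lp.isCompactOperator_diagL (a := d) 2 hd).comp_clm N

/-- Lemma 5.5: if the diagonal of `M` is bounded away from zero and the matrix
`G = F D⁻¹` (off-diagonal part divided by the diagonal) defines a bounded operator `Gop` on
`ℓ²(ℕ)` such that `I + Gop` is invertible, then the operator `L x = (I + Gop)(D x)` with
domain `Dom(D) = {x : (M_{kk} x_k)_k ∈ ℓ²}` (which is dense) is a bijection onto `ℓ²(ℕ)`
whose inverse is the bounded operator `R = D′ ∘ (I + Gop)⁻¹`; if moreover `|M_{kk}| → ∞`,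
then `R` is compact. -/
theorem diag_dominant_invertible (M : ℕ → ℕ → ℂ)
    (hne : ∀ k, M k k ≠ 0) (δ : ℝ) (hδ : 0 < δ) (hdiag : ∀ k, δ ≤ ‖M k k‖)
    (G : ℕ → ℕ → ℂ) (hG : ∀ j k, G j k = if j = k then 0 else M j k / M k k)
    (Gop : lp (fun _ : ℕ => ℂ) 2 →L[ℂ] lp (fun _ : ℕ => ℂ) 2)
    (hGop : RepresentsMatrix G Gop)
    (hinv : IsUnit (1 + Gop)) :
    -- (a) the domain of the diagonal operator `D` is dense
    Dense {x : lp (fun _ : ℕ => ℂ) 2 | Memℓp (fun k => M k k * x k) 2} ∧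
    -- (b) `L = (I + Gop) ∘ D` is a bijection from `Dom(D)` onto `ℓ²(ℕ)` with bounded inverse
    --     `R = D′ ∘ (I + Gop)⁻¹`, where `D′` is the diagonal matrix with entries `1/M_{kk}`
    ∃ R : lp (fun _ : ℕ => ℂ) 2 →L[ℂ] lp (fun _ : ℕ => ℂ) 2,
      (∀ (y : lp (fun _ : ℕ => ℂ) 2) (k : ℕ),
        R y k = (M k k)⁻¹ * (Ring.inverse (1 + Gop) y) k) ∧
      (∀ (x : lp (fun _ : ℕ => ℂ) 2) (hx : Memℓp (fun k => M k k * x k) 2),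
        R ((1 + Gop) (⟨fun k => M k k * x k, hx⟩ : lp (fun _ : ℕ => ℂ) 2)) = x) ∧
      (∀ y : lp (fun _ : ℕ => ℂ) 2, ∃ hx : Memℓp (fun k => M k k * (R y) k) 2,
        (1 + Gop) (⟨fun k => M k k * (R y) k, hx⟩ : lp (fun _ : ℕ => ℂ) 2) = y) ∧
      -- (c) if `|M_{kk}| → ∞`, then `R` is a compact operator
      (Tendsto (fun k => ‖M k k‖) atTop atTop → IsCompactOperator ⇑R) :=
  diag_dominant_invertible_general M hne δ hδ hdiag Gop hinv
end
end

section
/- Let M : ℕ × ℕ → ℂ be an infinite matrix such that a₁ := sup_j ∑_k |M_{jk}| < ∞ (the supremum of the ℓ¹-norms of the rows) and a₂ := sup_k ∑_j |M_{jk}| < ∞ (the supremum of the ℓ¹-norms of the columns). Then M defines a bounded operator T on ℓ²(ℕ), and ‖T‖ ≤ √(a₁ · a₂). -/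
/-!
Schur test. For `y = |x|` and `A = |M|`, the weighted Cauchy–Schwarz inequality on row `j` gives
`(∑ₖ A j k * y k)² ≤ (∑ₖ A j k) * ∑ₖ A j k * (y k)² ≤ a₁ * ∑ₖ A j k * (y k)²`.
Summing over `j` and exchanging the order of summation (all terms are nonnegative), the column bound
gives `∑ⱼ (∑ₖ A j k * y k)² ≤ a₁ * a₂ * ∑ₖ (y k)²`, i.e. `‖M x‖² ≤ a₁ a₂ ‖x‖²`.
-/

open Filter Topology

noncomputable section

section WeightedCauchySchwarz

variable {κ : Type*} {a y : κ → ℝ}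

theorem summable_mul_of_summable_mul_sq (ha : ∀ k, 0 ≤ a k) (ha_sum : Summable a)
    (hay : Summable fun k => a k * y k ^ 2) : Summable fun k => a k * y k := by
  refine (ha_sum.add hay).of_norm_bounded fun k => ?_
  have hy : |y k| ≤ 1 + y k ^ 2 := by nlinarith [two_mul_le_add_sq 1 |y k|, sq_abs (y k)]
  rw [Real.norm_eq_abs, abs_mul, abs_of_nonneg (ha k)]
  nlinarith [ha k]

theorem sq_tsum_mul_le_tsum_mul_tsum_mul_sq (ha : ∀ k, 0 ≤ a k) (ha_sum : Summable a)
    (hay : Summable fun k => a k * y k ^ 2) :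
    (∑' k, a k * y k) ^ 2 ≤ (∑' k, a k) * ∑' k, a k * y k ^ 2 := by
  have hpartial : ∀ s : Finset κ,
      (∑ k ∈ s, a k * y k) ^ 2 ≤ (∑' k, a k) * ∑' k, a k * y k ^ 2 := fun s =>
    (Finset.sum_sq_le_sum_mul_sum_of_sq_le_mul s (fun k _ => ha k)
      (fun k _ => mul_nonneg (ha k) (sq_nonneg _)) (fun k _ => le_of_eq (by ring))).trans
      (mul_le_mul (ha_sum.sum_le_tsum s fun k _ => ha k)
        (hay.sum_le_tsum s fun k _ => mul_nonneg (ha k) (sq_nonneg _))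
        (Finset.sum_nonneg fun k _ => mul_nonneg (ha k) (sq_nonneg _))
        (tsum_nonneg ha))
  exact le_of_tendsto' ((summable_mul_of_summable_mul_sq ha ha_sum hay).hasSum.pow 2) hpartial

end WeightedCauchySchwarz

section SchurTest

variable {ι κ : Type*} {A : ι → κ → ℝ} {a₁ a₂ : ℝ} {y : κ → ℝ}
  (hA : ∀ j k, 0 ≤ A j k) (ha₁ : 0 ≤ a₁)
  (hrow : ∀ j, Summable (A j)) (hrow_le : ∀ j, ∑' k, A j k ≤ a₁)
  (hcol : ∀ k, Summable fun j => A j k) (hcol_le : ∀ k, ∑' j, A j k ≤ a₂)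
  (hy : Summable fun k => y k ^ 2)
include hcol_le

theorem tsum_mul_sq_le_of_col_le (k : κ) : ∑' j, A j k * y k ^ 2 ≤ a₂ * y k ^ 2 := by
  rw [tsum_mul_right]
  exact mul_le_mul_of_nonneg_right (hcol_le k) (sq_nonneg _)

include hA hcol hy

theorem summable_prod_mul_sq_of_col_le : Summable fun p : ι × κ => A p.1 p.2 * y p.2 ^ 2 := by
  have hswap : Summable fun p : κ × ι => A p.2 p.1 * y p.1 ^ 2 :=
    (summable_prod_of_nonneg fun p => mul_nonneg (hA _ _) (sq_nonneg _)).2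
      ⟨fun k => (hcol k).mul_right (y k ^ 2), (hy.mul_left a₂).of_nonneg_of_le
        (fun k => tsum_nonneg fun j => mul_nonneg (hA _ _) (sq_nonneg _))
        (tsum_mul_sq_le_of_col_le hcol_le)⟩
  exact hswap.prod_symm

theorem tsum_tsum_mul_sq_le_of_col_le : ∑' j, ∑' k, A j k * y k ^ 2 ≤ a₂ * ∑' k, y k ^ 2 := by
  have hprod := summable_prod_mul_sq_of_col_le hA hcol hcol_le hy
  rw [← hprod.tsum_comm (f := fun j k => A j k * y k ^ 2), ← tsum_mul_left]
  exact hprod.prod_symm.prod.tsum_le_tsum (tsum_mul_sq_le_of_col_le hcol_le)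
    (hy.mul_left a₂)

include hrow

theorem summable_mul_of_schur (j : ι) : Summable fun k => A j k * y k :=
  summable_mul_of_summable_mul_sq (hA j) (hrow j)
    ((summable_prod_mul_sq_of_col_le hA hcol hcol_le hy).prod_factor j)

include ha₁ hrow_le

theorem summable_and_tsum_sq_tsum_mul_le_of_schur :
    Summable (fun j => (∑' k, A j k * y k) ^ 2) ∧
      ∑' j, (∑' k, A j k * y k) ^ 2 ≤ a₁ * a₂ * ∑' k, y k ^ 2 := by
  have hprod := summable_prod_mul_sq_of_col_le hA hcol hcol_le hy
  have hrow_sq : ∀ j, (∑' k, A j k * y k) ^ 2 ≤ a₁ * ∑' k, A j k * y k ^ 2 := fun j =>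
    (sq_tsum_mul_le_tsum_mul_tsum_mul_sq (hA j) (hrow j) (hprod.prod_factor j)).trans
      (mul_le_mul_of_nonneg_right (hrow_le j)
        (tsum_nonneg fun k => mul_nonneg (hA j k) (sq_nonneg _)))
  have hsum : Summable fun j => (∑' k, A j k * y k) ^ 2 :=
    (hprod.prod.mul_left a₁).of_nonneg_of_le (fun j => sq_nonneg _) hrow_sq
  refine ⟨hsum, ?_⟩
  calc ∑' j, (∑' k, A j k * y k) ^ 2 ≤ a₁ * ∑' j, ∑' k, A j k * y k ^ 2 := by
        rw [← tsum_mul_left]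
        exact hsum.tsum_le_tsum hrow_sq (hprod.prod.mul_left a₁)
    _ ≤ a₁ * (a₂ * ∑' k, y k ^ 2) :=
        mul_le_mul_of_nonneg_left (tsum_tsum_mul_sq_le_of_col_le hA hcol hcol_le hy) ha₁
    _ = a₁ * a₂ * ∑' k, y k ^ 2 := by ring

end SchurTest

namespace lp

variable {α : Type*} {E : α → Type*} [∀ i, NormedAddCommGroup (E i)]

theorem summable_norm_sq (f : lp E 2) : Summable fun i => ‖f i‖ ^ 2 := by
  simpa using (lp.memℓp f).summable (by norm_num)

theorem norm_sq_eq_tsum_norm_sq (f : lp E 2) : ‖f‖ ^ 2 = ∑' i, ‖f i‖ ^ 2 := by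
  simpa using lp.norm_rpow_eq_tsum (by norm_num) f

theorem memℓp_two_of_summable_norm_sq {f : ∀ i, E i} (hf : Summable fun i => ‖f i‖ ^ 2) :
    Memℓp f 2 :=
  memℓp_gen (by simpa using hf)

theorem norm_le_of_tsum_norm_sq_le {f : lp E 2} {C : ℝ} (hC : 0 ≤ C)
    (hf : ∑' i, ‖f i‖ ^ 2 ≤ C ^ 2) : ‖f‖ ≤ C :=
  lp.norm_le_of_tsum_le (by norm_num) hC (by simpa using hf)

end lp

section MatrixOperator

variable {ι κ 𝕜 : Type*} [NontriviallyNormedField 𝕜] {M : ι → κ → 𝕜} {a₁ a₂ : ℝ}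
  (ha₁ : 0 ≤ a₁) (ha₂ : 0 ≤ a₂)
  (hrow : ∀ j, Summable fun k => ‖M j k‖) (hrow_le : ∀ j, ∑' k, ‖M j k‖ ≤ a₁)
  (hcol : ∀ k, Summable fun j => ‖M j k‖) (hcol_le : ∀ k, ∑' j, ‖M j k‖ ≤ a₂)
include hrow hcol hcol_le

theorem summable_norm_mul_of_schur (x : lp (fun _ : κ => 𝕜) 2) (j : ι) :
    Summable fun k => ‖M j k * x k‖ := by
  simpa only [norm_mul] using summable_mul_of_schur (fun _ _ => norm_nonneg _) hrow hcol hcol_le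
    (lp.summable_norm_sq x) j

include ha₁ hrow_le

theorem summable_and_tsum_norm_tsum_mul_sq_le_of_schur (x : lp (fun _ : κ => 𝕜) 2) :
    Summable (fun j => ‖∑' k, M j k * x k‖ ^ 2) ∧
      ∑' j, ‖∑' k, M j k * x k‖ ^ 2 ≤ a₁ * a₂ * ‖x‖ ^ 2 := by
  obtain ⟨hsum, hle⟩ := summable_and_tsum_sq_tsum_mul_le_of_schur (fun _ _ => norm_nonneg _) ha₁
    hrow hrow_le hcol hcol_le (lp.summable_norm_sq x)
  have hpt : ∀ j, ‖∑' k, M j k * x k‖ ^ 2 ≤ (∑' k, ‖M j k‖ * ‖x k‖) ^ 2 := fun j => by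
    gcongr
    simpa only [norm_mul] using
      norm_tsum_le_tsum_norm (summable_norm_mul_of_schur hrow hcol hcol_le x j)
  have hsum' := hsum.of_nonneg_of_le (fun _ => sq_nonneg _) hpt
  refine ⟨hsum', ?_⟩
  rw [lp.norm_sq_eq_tsum_norm_sq]
  exact (hsum'.tsum_le_tsum hpt hsum).trans hle

variable (M) [CompleteSpace 𝕜]

def lpMatrixLinearMap : lp (fun _ : κ => 𝕜) 2 →ₗ[𝕜] lp (fun _ : ι => 𝕜) 2 where
  toFun x := ⟨fun j => ∑' k, M j k * x k, lp.memℓp_two_of_summable_norm_sq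
    (summable_and_tsum_norm_tsum_mul_sq_le_of_schur ha₁ hrow hrow_le hcol hcol_le x).1⟩
  map_add' x y := by
    ext j
    have hsum := fun z => (summable_norm_mul_of_schur hrow hcol hcol_le z j).of_norm
    simp only [lp.coeFn_add, Pi.add_apply, mul_add]
    exact (hsum x).tsum_add (hsum y)
  map_smul' c x := by
    ext j
    simp only [lp.coeFn_smul, Pi.smul_apply, smul_eq_mul, RingHom.id_apply, mul_left_comm _ c]
    exact tsum_mul_left

include ha₂

theorem norm_lpMatrixLinearMap_le (x : lp (fun _ : κ => 𝕜) 2) :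
    ‖lpMatrixLinearMap M ha₁ hrow hrow_le hcol hcol_le x‖ ≤ √(a₁ * a₂) * ‖x‖ :=
  lp.norm_le_of_tsum_norm_sq_le (by positivity) <| by
    rw [mul_pow, Real.sq_sqrt (mul_nonneg ha₁ ha₂)]
    exact (summable_and_tsum_norm_tsum_mul_sq_le_of_schur ha₁ hrow hrow_le hcol hcol_le x).2

def lpMatrixCLM : lp (fun _ : κ => 𝕜) 2 →L[𝕜] lp (fun _ : ι => 𝕜) 2 :=
  (lpMatrixLinearMap M ha₁ hrow hrow_le hcol hcol_le).mkContinuous √(a₁ * a₂)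
    (norm_lpMatrixLinearMap_le M ha₁ ha₂ hrow hrow_le hcol hcol_le)

theorem lpMatrixCLM_apply (x : lp (fun _ : κ => 𝕜) 2) (j : ι) :
    lpMatrixCLM M ha₁ ha₂ hrow hrow_le hcol hcol_le x j = ∑' k, M j k * x k :=
  rfl

theorem norm_lpMatrixCLM_le : ‖lpMatrixCLM M ha₁ ha₂ hrow hrow_le hcol hcol_le‖ ≤ √(a₁ * a₂) :=
  LinearMap.mkContinuous_norm_le _ (Real.sqrt_nonneg _) _

end MatrixOperator

/-- Schur-type interpolation bound (cf. proof of Theorem 5.11):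
if the rows of `M` have uniformly bounded `ℓ¹`-norms with supremum `a₁` and the columns have
uniformly bounded `ℓ¹`-norms with supremum `a₂`, then `M` defines a bounded operator `T` on
`ℓ²(ℕ)` with `‖T‖ ≤ √(a₁ a₂)`. -/
theorem schur_interpolation_bound (M : ℕ → ℕ → ℂ)
    (hrow : ∀ j, Summable fun k => ‖M j k‖)
    (hcol : ∀ k, Summable fun j => ‖M j k‖)
    (h₁ : BddAbove (Set.range fun j => ∑' k, ‖M j k‖))
    (h₂ : BddAbove (Set.range fun k => ∑' j, ‖M j k‖)) :
    ∃ T : lp (fun _ : ℕ => ℂ) 2 →L[ℂ] lp (fun _ : ℕ => ℂ) 2,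
      RepresentsMatrix M T ∧
      ‖T‖ ≤ Real.sqrt ((⨆ j, ∑' k, ‖M j k‖) * (⨆ k, ∑' j, ‖M j k‖)) := by
  have hrow_le : ∀ j, ∑' k, ‖M j k‖ ≤ ⨆ j, ∑' k, ‖M j k‖ := le_ciSup h₁
  have hcol_le : ∀ k, ∑' j, ‖M j k‖ ≤ ⨆ k, ∑' j, ‖M j k‖ := le_ciSup h₂
  have ha₁ := (tsum_nonneg fun _ => norm_nonneg _).trans (hrow_le 0)
  have ha₂ := (tsum_nonneg fun _ => norm_nonneg _).trans (hcol_le 0)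
  refine ⟨lpMatrixCLM M ha₁ ha₂ hrow hrow_le hcol hcol_le, fun x j =>
    ⟨summable_norm_mul_of_schur hrow hcol hcol_le x j, lpMatrixCLM_apply ..⟩, ?_⟩
  exact norm_lpMatrixCLM_le M ha₁ ha₂ hrow hrow_le hcol hcol_le
end
end

section
/- Let M : ℕ × ℕ → ℂ be an infinite matrix with δ := inf_k |M_{kk}| > 0 (in particular all diagonal entries are nonzero). Let G be the infinite matrix with entries G_{jk} = M_{jk}/M_{kk} for j ≠ k and G_{jj} = 0, and assume b₁ := sup_j ∑_k |G_{jk}| < 1 and b₂ := sup_k ∑_j |G_{jk}| < 1. Then: (a) G defines a bounded operator on ℓ²(ℕ) with ‖G‖ ≤ √(b₁ b₂) < 1, so that I + G is invertible in the bounded operators on ℓ²(ℕ); (b) the operator L x = (I + G)(D x), where D is the diagonal operator D x = (M_{kk} x_k)_k with domain Dom(D) = { x ∈ ℓ²(ℕ) : (M_{kk} x_k)_k ∈ ℓ²(ℕ) }, is a bijection from Dom(D) onto ℓ²(ℕ) whose inverse is a bounded operator of norm at most 1/(δ(1 − √(b₁ b₂))); (c) if in addition |M_{kk}| → ∞ as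 k → ∞, then this inverse is a compact operator on ℓ²(ℕ). -/
/-
Schur test: Cauchy–Schwarz with weights `|G j k|` gives `|(G x) j|² ≤ b₁ ∑ₖ |G j k| |x k|²`, and
summing over `j` with the column bounds gives `‖G x‖² ≤ b₁ b₂ ‖x‖²`. Hence `‖G‖ < 1`, and the
Neumann series inverts `I + G` with `‖(I + G)⁻¹‖ ≤ 1 / (1 - √(b₁ b₂))`. The inverse of
`(I + G) D` is `D⁻¹ (I + G)⁻¹`, where `D⁻¹` is diagonal with entries of size at most `1 / δ`; when
`|M k k| → ∞` these entries tend to `0`, so `D⁻¹` is a norm limit of finite-rank truncations and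
hence compact.
-/

open Filter Topology

noncomputable section

variable {ι 𝕜 : Type*}

local notation "ℓ²" => lp (fun _ : ι => 𝕜) 2

lemma sq_tsum_mul_le_tsum_mul_tsum {a y : ι → ℝ} (ha : ∀ k, 0 ≤ a k) (ha_sum : Summable a)
    (hay : Summable fun k => a k * y k) (hay2 : Summable fun k => a k * y k ^ 2) :
    (∑' k, a k * y k) ^ 2 ≤ (∑' k, a k) * ∑' k, a k * y k ^ 2 :=
  le_of_tendsto_of_tendsto' (hay.hasSum.pow 2) (Tendsto.mul ha_sum.hasSum hay2.hasSum) fun s =>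
    s.sum_sq_le_sum_mul_sum_of_sq_le_mul (r := fun k => a k * y k) (f := a)
      (g := fun k => a k * y k ^ 2) (fun k _ => ha k) (fun k _ => mul_nonneg (ha k) (sq_nonneg _))
      fun k _ => le_of_eq (by ring)

theorem exists_inverse_one_add_of_norm_le {R : Type*} [NormedRing R] [HasSummableGeomSeries R]
    (h1 : ‖(1 : R)‖ ≤ 1) {a : R} {r : ℝ} (ha : ‖a‖ ≤ r) (hr : r < 1) :
    ∃ q : R, q * (1 + a) = 1 ∧ (1 + a) * q = 1 ∧ ‖q‖ ≤ (1 - r)⁻¹ := by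
  have ha1 : ‖-a‖ < 1 := by rw [norm_neg]; linarith
  refine ⟨∑' n, (-a) ^ n, ?_, ?_, ?_⟩
  · simpa using geom_series_mul_neg (-a) ha1
  · simpa using mul_neg_geom_series (-a) ha1
  · have : (1 - ‖a‖)⁻¹ ≤ (1 - r)⁻¹ := inv_anti₀ (by linarith) (by linarith)
    have := tsum_geometric_le_of_norm_lt_one (-a) ha1
    rw [norm_neg] at this
    linarith

section NontriviallyNormedField

variable [NontriviallyNormedField 𝕜]

lemma lp.summable_norm_sq_s4 (x : ℓ²) : Summable fun k => ‖x k‖ ^ 2 := by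
  simpa using (lp.memℓp x).summable (p := 2) (by norm_num)

lemma lp.tsum_norm_sq (x : ℓ²) : ∑' k, ‖x k‖ ^ 2 = ‖x‖ ^ 2 := by
  simpa using (lp.norm_rpow_eq_tsum (p := 2) (by norm_num) x).symm

lemma lp.sum_norm_sq_le (x : ℓ²) (s : Finset ι) : ∑ k ∈ s, ‖x k‖ ^ 2 ≤ ‖x‖ ^ 2 := by
  simpa using lp.sum_rpow_le_norm_rpow (p := 2) (by norm_num) x s

theorem lp.exists_clm_of_sum_sq_le (f : ℓ² →ₗ[𝕜] ι → 𝕜) {C : ℝ} (hC : 0 ≤ C)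
    (hf : ∀ x s, ∑ k ∈ s, ‖f x k‖ ^ 2 ≤ C ^ 2 * ‖x‖ ^ 2) :
    ∃ T : ℓ² →L[𝕜] ℓ², (∀ x, ⇑(T x) = f x) ∧ ‖T‖ ≤ C := by
  have hmem (x : ℓ²) : Memℓp (f x) 2 := memℓp_gen' (C := C ^ 2 * ‖x‖ ^ 2) (by simpa using hf x)
  let g : ℓ² →ₗ[𝕜] ℓ² :=
    { toFun x := ⟨f x, hmem x⟩
      map_add' x y := Subtype.ext (map_add f x y)
      map_smul' c x := Subtype.ext (map_smul f c x) }
  have hg (x : ℓ²) : ‖g x‖ ≤ C * ‖x‖ :=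
    lp.norm_le_of_forall_sum_le (p := 2) (by norm_num) (by positivity) fun s => by
      simpa [mul_pow, g] using hf x s
  exact ⟨g.mkContinuous C hg, fun _ => rfl, LinearMap.mkContinuous_norm_le g hC hg⟩

lemma lp.sum_norm_mul_sq_le {c : ι → 𝕜} {C : ℝ} (hc : ∀ k, ‖c k‖ ≤ C) (x : ℓ²)
    (s : Finset ι) : ∑ k ∈ s, ‖c k * x k‖ ^ 2 ≤ C ^ 2 * ‖x‖ ^ 2 :=
  calc ∑ k ∈ s, ‖c k * x k‖ ^ 2 ≤ ∑ k ∈ s, C ^ 2 * ‖x k‖ ^ 2 := by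
        gcongr with k; rw [norm_mul, mul_pow]; gcongr; exact hc k
    _ ≤ C ^ 2 * ‖x‖ ^ 2 := by rw [← Finset.mul_sum]; gcongr; exact lp.sum_norm_sq_le x s

theorem lp.norm_le_of_apply_eq_mul {T : ℓ² →L[𝕜] ℓ²} {c : ι → 𝕜} (hT : ∀ x k, T x k = c k * x k)
    {C : ℝ} (hC : 0 ≤ C) (hc : ∀ k, ‖c k‖ ≤ C) : ‖T‖ ≤ C :=
  T.opNorm_le_bound hC fun x =>
    lp.norm_le_of_forall_sum_le (p := 2) (by norm_num) (by positivity) fun s => by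
      simpa [hT, mul_pow] using lp.sum_norm_mul_sq_le hc x s

theorem lp.exists_clm_apply_eq_mul (c : ι → 𝕜) {C : ℝ} (hc : ∀ k, ‖c k‖ ≤ C) :
    ∃ T : ℓ² →L[𝕜] ℓ², ∀ x k, T x k = c k * x k := by
  let f : ℓ² →ₗ[𝕜] ι → 𝕜 :=
    { toFun x k := c k * x k
      map_add' x y := by ext k; simp [mul_add]
      map_smul' a x := by ext k; simp [mul_left_comm] }
  have hc' (k : ι) : ‖c k‖ ≤ max C 0 := (hc k).trans (le_max_left C 0)
  obtain ⟨T, hT, -⟩ :=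
    lp.exists_clm_of_sum_sq_le f (le_max_right C 0) (lp.sum_norm_mul_sq_le hc')
  exact ⟨T, fun x k => congrFun (hT x) k⟩

lemma lp.summable_norm_mul_s4 {a : ι → 𝕜} (ha : Summable fun k => ‖a k‖) (x : ℓ²) :
    Summable fun k => ‖a k * x k‖ :=
  (ha.mul_right ‖x‖).of_nonneg_of_le (fun _ => norm_nonneg _) fun k => by
    rw [norm_mul]; gcongr; exact lp.norm_apply_le_norm (by norm_num) x k

lemma lp.summable_norm_mul_norm_sq {a : ι → 𝕜} (ha : Summable fun k => ‖a k‖) (x : ℓ²) :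
    Summable fun k => ‖a k‖ * ‖x k‖ ^ 2 :=
  (ha.mul_right (‖x‖ ^ 2)).of_nonneg_of_le (fun _ => by positivity) fun k => by
    gcongr; exact lp.norm_apply_le_norm (by norm_num) x k

lemma lp.norm_tsum_mul_sq_le {a : ι → 𝕜} (ha : Summable fun k => ‖a k‖) (x : ℓ²) :
    ‖∑' k, a k * x k‖ ^ 2 ≤ (∑' k, ‖a k‖) * ∑' k, ‖a k‖ * ‖x k‖ ^ 2 := by
  have hsum := lp.summable_norm_mul_s4 ha x
  simp only [norm_mul] at hsum
  calc ‖∑' k, a k * x k‖ ^ 2 ≤ (∑' k, ‖a k‖ * ‖x k‖) ^ 2 := by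
        gcongr
        simpa only [norm_mul] using norm_tsum_le_tsum_norm (lp.summable_norm_mul_s4 ha x)
    _ ≤ _ := sq_tsum_mul_le_tsum_mul_tsum (fun _ => norm_nonneg _) ha hsum
        (lp.summable_norm_mul_norm_sq ha x)

lemma lp.sum_tsum_norm_mul_norm_sq_le {A : ι → ι → 𝕜} {b₂ : ℝ}
    (hrow : ∀ j, Summable fun k => ‖A j k‖) (hcol : ∀ k, Summable fun j => ‖A j k‖)
    (hb₂ : ∀ k, ∑' j, ‖A j k‖ ≤ b₂) (x : ℓ²) (s : Finset ι) :
    ∑ j ∈ s, ∑' k, ‖A j k‖ * ‖x k‖ ^ 2 ≤ b₂ * ‖x‖ ^ 2 := by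
  rw [← (Summable.tsum_finsetSum fun j _ => lp.summable_norm_mul_norm_sq (hrow j) x),
    ← lp.tsum_norm_sq, ← tsum_mul_left]
  refine Summable.tsum_le_tsum (fun k => ?_)
    (summable_sum fun j _ => lp.summable_norm_mul_norm_sq (hrow j) x)
    ((lp.summable_norm_sq_s4 x).mul_left b₂)
  rw [← Finset.sum_mul]
  gcongr
  exact (Summable.sum_le_tsum s (fun j _ => norm_nonneg _) (hcol k)).trans (hb₂ k)

theorem lp.exists_clm_of_schur [Nonempty ι] [CompleteSpace 𝕜] {A : ι → ι → 𝕜} {b₁ b₂ : ℝ}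
    (hrow : ∀ j, Summable fun k => ‖A j k‖) (hb₁ : ∀ j, ∑' k, ‖A j k‖ ≤ b₁)
    (hcol : ∀ k, Summable fun j => ‖A j k‖) (hb₂ : ∀ k, ∑' j, ‖A j k‖ ≤ b₂) :
    ∃ T : ℓ² →L[𝕜] ℓ², (∀ x j, Summable (fun k => ‖A j k * x k‖) ∧ T x j = ∑' k, A j k * x k) ∧
      ‖T‖ ≤ √(b₁ * b₂) := by
  have hb₁0 : 0 ≤ b₁ := (tsum_nonneg fun _ => norm_nonneg _).trans (hb₁ (Classical.arbitrary ι))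
  have hb₂0 : 0 ≤ b₂ := (tsum_nonneg fun _ => norm_nonneg _).trans (hb₂ (Classical.arbitrary ι))
  have hsum (x : ℓ²) (j : ι) : Summable fun k => A j k * x k :=
    (lp.summable_norm_mul_s4 (hrow j) x).of_norm
  let f : ℓ² →ₗ[𝕜] ι → 𝕜 :=
    { toFun x j := ∑' k, A j k * x k
      map_add' x y := by
        ext j
        simp only [lp.coeFn_add, Pi.add_apply, mul_add]
        exact (hsum x j).tsum_add (hsum y j)
      map_smul' c x := by
        ext j
        simp only [lp.coeFn_smul, Pi.smul_apply, smul_eq_mul, RingHom.id_apply, mul_left_comm _ c]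
        exact tsum_mul_left }
  have hf (x : ℓ²) (s : Finset ι) : ∑ j ∈ s, ‖f x j‖ ^ 2 ≤ √(b₁ * b₂) ^ 2 * ‖x‖ ^ 2 :=
    calc ∑ j ∈ s, ‖f x j‖ ^ 2 ≤ ∑ j ∈ s, b₁ * ∑' k, ‖A j k‖ * ‖x k‖ ^ 2 := by
          gcongr with j
          exact (lp.norm_tsum_mul_sq_le (hrow j) x).trans (by gcongr; exact hb₁ j)
      _ ≤ b₁ * (b₂ * ‖x‖ ^ 2) := by
          rw [← Finset.mul_sum]; gcongr; exact lp.sum_tsum_norm_mul_norm_sq_le hrow hcol hb₂ x s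
      _ = √(b₁ * b₂) ^ 2 * ‖x‖ ^ 2 := by rw [Real.sq_sqrt (by positivity)]; ring
  obtain ⟨T, hT, hTnorm⟩ := lp.exists_clm_of_sum_sq_le f (Real.sqrt_nonneg _) hf
  exact ⟨T, fun x j => ⟨lp.summable_norm_mul_s4 (hrow j) x, congrFun (hT x) j⟩, hTnorm⟩

section ProperSpace

variable [ProperSpace 𝕜]

theorem lp.isCompactOperator_of_apply_eq_mul {T : ℓ² →L[𝕜] ℓ²} {c : ι → 𝕜}
    (hT : ∀ x k, T x k = c k * x k) (hc : Tendsto c cofinite (𝓝 0)) : IsCompactOperator T := by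
  classical
  let F (s : Finset ι) : ℓ² →L[𝕜] ℓ² :=
    ∑ k ∈ s, (lp.singleContinuousLinearMap 𝕜 (fun _ : ι => 𝕜) 2 k).comp
      (c k • lp.evalCLM 𝕜 (fun _ : ι => 𝕜) 2 k)
  have hF (s : Finset ι) (x : ℓ²) (k : ι) : (T - F s) x k = (if k ∈ s then 0 else c k) * x k := by
    simp only [F, sub_apply, FunLike.coe_sum, Finset.sum_apply, lp.coeFn_sub, Pi.sub_apply,
      lp.coeFn_sum, hT, ContinuousLinearMap.comp_apply, smul_apply,
      lp.singleContinuousLinearMap_apply, lp.single_apply, lp.evalCLM,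
      LinearMap.mkContinuous_apply, lp.evalₗ_apply, smul_eq_mul, Finset.sum_pi_single]
    split_ifs <;> simp
  have hFc (s : Finset ι) : IsCompactOperator (F s) :=
    (compactOperator _ _ _).sum_mem fun k _ =>
      (isCompactOperator_of_locallyCompactSpace_rng
        (lp.singleContinuousLinearMap 𝕜 (fun _ : ι => 𝕜) 2 k)).comp_clm _
  refine isCompactOperator_of_tendsto (l := atTop) (F := F) ?_ (Eventually.of_forall hFc)
  refine Metric.tendsto_atTop.2 fun ε hε => ?_
  have hsmall : ∀ᶠ k in cofinite, ‖c k‖ ≤ ε / 2 :=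
    (tendsto_zero_iff_norm_tendsto_zero.1 hc).eventually (eventually_le_nhds (half_pos hε))
  refine ⟨(eventually_cofinite.1 hsmall).toFinset, fun s hs => ?_⟩
  rw [dist_comm, dist_eq_norm]
  refine (lp.norm_le_of_apply_eq_mul (hF s) (half_pos hε).le fun k => ?_).trans_lt (half_lt_self hε)
  split_ifs with hk
  · simpa using (half_pos hε).le
  · by_contra h
    exact hk (hs (by simpa using h))

theorem lp.exists_inverse_comp_diagonal {d : ι → 𝕜} {δ : ℝ} (hδ : 0 < δ) (hd : ∀ k, δ ≤ ‖d k‖)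
    {P Q : ℓ² →L[𝕜] ℓ²} (hQP : Q * P = 1) (hPQ : P * Q = 1) :
    ∃ R : ℓ² →L[𝕜] ℓ²,
      (∀ (x : ℓ²) (hx : Memℓp (fun k => d k * x k) 2), R (P ⟨fun k => d k * x k, hx⟩) = x) ∧
      (∀ y : ℓ², ∃ hx : Memℓp (fun k => d k * R y k) 2, P ⟨fun k => d k * R y k, hx⟩ = y) ∧
      ‖R‖ ≤ δ⁻¹ * ‖Q‖ ∧
      (Tendsto (fun k => ‖d k‖) cofinite atTop → IsCompactOperator R) := by
  have hd0 (k : ι) : d k ≠ 0 := norm_pos_iff.1 (hδ.trans_le (hd k))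
  have hdinv (k : ι) : ‖(d k)⁻¹‖ ≤ δ⁻¹ := by rw [norm_inv]; exact inv_anti₀ hδ (hd k)
  obtain ⟨D, hD⟩ := lp.exists_clm_apply_eq_mul (fun k => (d k)⁻¹) hdinv
  refine ⟨D ∘L Q, fun x hx => ?_, fun y => ?_, ?_, fun hdinf => ?_⟩
  · rw [ContinuousLinearMap.comp_apply, show Q (P _) = _ from DFunLike.congr_fun hQP _]
    ext k
    simp [hD, hd0]
  · have hDQ : (fun k => d k * (D ∘L Q) y k) = Q y := funext fun k => by simp [hD, hd0]
    refine ⟨hDQ ▸ (Q y).2, ?_⟩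
    rw [show (⟨_, hDQ ▸ (Q y).2⟩ : ℓ²) = Q y from lp.ext hDQ]
    exact DFunLike.congr_fun hPQ y
  · calc ‖D ∘L Q‖ ≤ ‖D‖ * ‖Q‖ := D.opNorm_comp_le Q
      _ ≤ δ⁻¹ * ‖Q‖ := by gcongr; exact lp.norm_le_of_apply_eq_mul hD (by positivity) hdinv
  · have hinv : Tendsto (fun k => (d k)⁻¹) cofinite (𝓝 0) := by
      simpa [tendsto_zero_iff_norm_tendsto_zero] using hdinf.inv_tendsto_atTop
    exact (lp.isCompactOperator_of_apply_eq_mul hD hinv).comp_clm Q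

end ProperSpace

end NontriviallyNormedField

theorem gershgorin_invertibility_general (M : ℕ → ℕ → ℂ)
    (δ : ℝ) (hδ : 0 < δ) (hdiag : ∀ k, δ ≤ ‖M k k‖)
    (G : ℕ → ℕ → ℂ)
    (b₁ b₂ : ℝ) (hb₁lt : b₁ < 1) (hb₂lt : b₂ < 1)
    (hGrow : ∀ j, Summable fun k => ‖G j k‖) (hb₁ : ∀ j, ∑' k, ‖G j k‖ ≤ b₁)
    (hGcol : ∀ k, Summable fun j => ‖G j k‖) (hb₂ : ∀ k, ∑' j, ‖G j k‖ ≤ b₂) :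
    -- (a) `G` defines a bounded operator of norm `≤ √(b₁ b₂) < 1` and `I + G` is invertible
    ∃ Gop : lp (fun _ : ℕ => ℂ) 2 →L[ℂ] lp (fun _ : ℕ => ℂ) 2,
      RepresentsMatrix G Gop ∧
      ‖Gop‖ ≤ Real.sqrt (b₁ * b₂) ∧ Real.sqrt (b₁ * b₂) < 1 ∧
      IsUnit (1 + Gop) ∧
      -- (b) `L = (I + Gop) ∘ D` is a bijection from `Dom(D)` onto `ℓ²(ℕ)` whose inverse `R`
      --     is bounded with `‖R‖ ≤ 1/(δ(1 − √(b₁ b₂)))`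
      ∃ R : lp (fun _ : ℕ => ℂ) 2 →L[ℂ] lp (fun _ : ℕ => ℂ) 2,
        (∀ (x : lp (fun _ : ℕ => ℂ) 2) (hx : Memℓp (fun k => M k k * x k) 2),
          R ((1 + Gop) (⟨fun k => M k k * x k, hx⟩ : lp (fun _ : ℕ => ℂ) 2)) = x) ∧
        (∀ y : lp (fun _ : ℕ => ℂ) 2, ∃ hx : Memℓp (fun k => M k k * (R y) k) 2,
          (1 + Gop) (⟨fun k => M k k * (R y) k, hx⟩ : lp (fun _ : ℕ => ℂ) 2) = y) ∧
        ‖R‖ ≤ 1 / (δ * (1 - Real.sqrt (b₁ * b₂))) ∧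
        -- (c) if `|M_{kk}| → ∞`, then `R` is a compact operator
        (Tendsto (fun k => ‖M k k‖) atTop atTop → IsCompactOperator ⇑R) := by
  have hb₁0 : 0 ≤ b₁ := (tsum_nonneg fun _ => norm_nonneg _).trans (hb₁ 0)
  have hb₂0 : 0 ≤ b₂ := (tsum_nonneg fun _ => norm_nonneg _).trans (hb₂ 0)
  have hr : √(b₁ * b₂) < 1 := (Real.sqrt_lt' one_pos).2 (by nlinarith)
  obtain ⟨Gop, hGop, hGnorm⟩ := lp.exists_clm_of_schur hGrow hb₁ hGcol hb₂
  obtain ⟨Q, hQl, hQr, hQnorm⟩ :=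
    exists_inverse_one_add_of_norm_le ContinuousLinearMap.norm_id_le hGnorm hr
  obtain ⟨R, hRl, hRr, hRnorm, hRc⟩ := lp.exists_inverse_comp_diagonal hδ hdiag hQl hQr
  refine ⟨Gop, hGop, hGnorm, hr, ⟨⟨1 + Gop, Q, hQr, hQl⟩, rfl⟩, R, hRl, hRr, ?_,
    fun h => hRc (by rwa [Nat.cofinite_eq_atTop])⟩
  calc ‖R‖ ≤ δ⁻¹ * (1 - √(b₁ * b₂))⁻¹ := hRnorm.trans (by gcongr)
    _ = 1 / (δ * (1 - √(b₁ * b₂))) := by rw [one_div, mul_inv]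

/-- Matrix form of Theorem 5.11 (Gershgorin-type invertibility). Let `M` have diagonal bounded
below by `δ > 0`, and let `G = F D⁻¹` (entries `M_{jk}/M_{kk}` off diagonal, `0` on the
diagonal) have row `ℓ¹`-norms at most `b₁ < 1` and column `ℓ¹`-norms at most `b₂ < 1`. Then
(a) `G` defines a bounded operator `Gop` with `‖Gop‖ ≤ √(b₁ b₂) < 1`, so `I + Gop` is
invertible; (b) `L x = (I + Gop)(D x)` with domain `{x : (M_{kk} x_k)_k ∈ ℓ²}` is a bijection
onto `ℓ²(ℕ)` whose inverse `R` is bounded with `‖R‖ ≤ 1/(δ (1 − √(b₁ b₂)))`; and (c) if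
moreover `|M_{kk}| → ∞`, then `R` is compact. -/
theorem gershgorin_invertibility (M : ℕ → ℕ → ℂ)
    (δ : ℝ) (hδ : 0 < δ) (hdiag : ∀ k, δ ≤ ‖M k k‖)
    (G : ℕ → ℕ → ℂ) (hG : ∀ j k, G j k = if j = k then 0 else M j k / M k k)
    (b₁ b₂ : ℝ) (hb₁lt : b₁ < 1) (hb₂lt : b₂ < 1)
    (hGrow : ∀ j, Summable fun k => ‖G j k‖) (hb₁ : ∀ j, ∑' k, ‖G j k‖ ≤ b₁)
    (hGcol : ∀ k, Summable fun j => ‖G j k‖) (hb₂ : ∀ k, ∑' j, ‖G j k‖ ≤ b₂) :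
    -- (a) `G` defines a bounded operator of norm `≤ √(b₁ b₂) < 1` and `I + G` is invertible
    ∃ Gop : lp (fun _ : ℕ => ℂ) 2 →L[ℂ] lp (fun _ : ℕ => ℂ) 2,
      RepresentsMatrix G Gop ∧
      ‖Gop‖ ≤ Real.sqrt (b₁ * b₂) ∧ Real.sqrt (b₁ * b₂) < 1 ∧
      IsUnit (1 + Gop) ∧
      -- (b) `L = (I + Gop) ∘ D` is a bijection from `Dom(D)` onto `ℓ²(ℕ)` whose inverse `R`
      --     is bounded with `‖R‖ ≤ 1/(δ(1 − √(b₁ b₂)))`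
      ∃ R : lp (fun _ : ℕ => ℂ) 2 →L[ℂ] lp (fun _ : ℕ => ℂ) 2,
        (∀ (x : lp (fun _ : ℕ => ℂ) 2) (hx : Memℓp (fun k => M k k * x k) 2),
          R ((1 + Gop) (⟨fun k => M k k * x k, hx⟩ : lp (fun _ : ℕ => ℂ) 2)) = x) ∧
        (∀ y : lp (fun _ : ℕ => ℂ) 2, ∃ hx : Memℓp (fun k => M k k * (R y) k) 2,
          (1 + Gop) (⟨fun k => M k k * (R y) k, hx⟩ : lp (fun _ : ℕ => ℂ) 2) = y) ∧
        ‖R‖ ≤ 1 / (δ * (1 - Real.sqrt (b₁ * b₂))) ∧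
        -- (c) if `|M_{kk}| → ∞`, then `R` is a compact operator
        (Tendsto (fun k => ‖M k k‖) atTop atTop → IsCompactOperator ⇑R) :=
  gershgorin_invertibility_general M δ hδ hdiag G b₁ b₂ hb₁lt hb₂lt hGrow hb₁ hGcol hb₂
end
end

section
/- Let H be a complex Hilbert space and let (u_n)_{n∈ℕ} and (v_n)_{n∈ℕ} be two Riesz bases of H that are biorthogonal to each other, i.e. ⟨u_m, v_n⟩ = δ_{mn} for all m, n. Let A be a bounded linear operator on H and σ : ℕ → ℂ. Then ⟨A f, v_n⟩ = σ(n) ⟨f, v_n⟩ holds for all f ∈ H and all n if and only if ⟨A* g, u_n⟩ = conj(σ(n)) ⟨g, u_n⟩ holds for all g ∈ H and all n, where A* is the Hilbert-space adjoint of A. -/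
/-
Moving `A` across the inner product, `A` is an `𝔏`-multiplier by `σ` exactly when every `vₙ` is
an eigenvector of `A*` with eigenvalue `σ n`, and `A*` is an `𝔏*`-multiplier by `conj σ` exactly
when every `uₙ` is an eigenvector of `A` with eigenvalue `conj (σ n)`. These two eigenvector
conditions are equivalent: pairing `A uₘ` with `vₙ` gives `⟪uₘ, A* vₙ⟫ = σ n δₘₙ`, which is also
`⟪conj (σ m) • uₘ, vₙ⟫`, and the `vₙ` span a dense subspace; the converse is the same argument
for `A*` with the roles of `u` and `v` exchanged.
-/

section

open ContinuousLinearMap Submodule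
open scoped InnerProduct

variable {𝕜 E ι : Type*} [RCLike 𝕜] [NormedAddCommGroup E] [InnerProductSpace 𝕜 E]

theorem eq_of_inner_left_of_dense_span {w : ι → E}
    (hw : Dense (span 𝕜 (Set.range w) : Set E)) {x y : E}
    (h : ∀ i, inner 𝕜 x (w i) = inner 𝕜 y (w i)) : x = y := by
  have hspan : span 𝕜 (Set.range w) ≤ LinearMap.ker (innerₛₗ 𝕜 (x - y)) :=
    span_le.2 <| by rintro _ ⟨i, rfl⟩; simp [h i]
  refine hw.eq_of_inner_left 𝕜 fun z hz => ?_
  simpa [inner_sub_left, sub_eq_zero] using hspan hz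

theorem biorthogonal_symm [DecidableEq ι] {u v : ι → E}
    (h : ∀ m n, inner 𝕜 (u m) (v n) = if m = n then 1 else 0) (m n : ι) :
    inner 𝕜 (v m) (u n) = if m = n then 1 else 0 := by
  rw [← inner_conj_symm, h n m]
  split_ifs <;> simp_all

variable [CompleteSpace E]

theorem forall_inner_apply_eq_mul_inner_iff (A : E →L[𝕜] E) (w : E) (c : 𝕜) :
    (∀ f, inner 𝕜 (A f) w = c * inner 𝕜 f w) ↔ (A†) w = c • w := by
  simp_rw [← adjoint_inner_right, ← inner_smul_right]
  exact ⟨ext_inner_left 𝕜, fun h f => by rw [h]⟩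

theorem apply_eq_conj_smul_of_adjoint_apply_eq_smul [DecidableEq ι] {u v : ι → E}
    (hv : Dense (span 𝕜 (Set.range v) : Set E))
    (hbiorth : ∀ m n, inner 𝕜 (u m) (v n) = if m = n then 1 else 0)
    {A : E →L[𝕜] E} {σ : ι → 𝕜} (hA : ∀ n, (A†) (v n) = σ n • v n) (m : ι) :
    A (u m) = starRingEnd 𝕜 (σ m) • u m := by
  refine eq_of_inner_left_of_dense_span hv fun n => ?_
  rw [← adjoint_inner_right, hA, inner_smul_right, inner_smul_left, RCLike.conj_conj, hbiorth]
  split_ifs with hmn <;> simp [hmn]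

theorem adjoint_apply_eq_smul_of_apply_eq_conj_smul [DecidableEq ι] {u v : ι → E}
    (hu : Dense (span 𝕜 (Set.range u) : Set E))
    (hbiorth : ∀ m n, inner 𝕜 (u m) (v n) = if m = n then 1 else 0)
    {A : E →L[𝕜] E} {σ : ι → 𝕜} (hA : ∀ n, A (u n) = starRingEnd 𝕜 (σ n) • u n) (m : ι) :
    (A†) (v m) = σ m • v m := by
  simpa using apply_eq_conj_smul_of_adjoint_apply_eq_smul hu (biorthogonal_symm hbiorth)
    (A := A†) (σ := starRingEnd 𝕜 ∘ σ) (by simpa using hA) m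

end

theorem fourier_multiplier_adjoint_general
    {H : Type*} [NormedAddCommGroup H] [InnerProductSpace ℂ H] [CompleteSpace H]
    (u v : ℕ → H)
    (hudense : Dense (↑(Submodule.span ℂ (Set.range u)) : Set H))
    (hvdense : Dense (↑(Submodule.span ℂ (Set.range v)) : Set H))
    (hbiorth : ∀ m n, (inner ℂ (u m) (v n) : ℂ) = if m = n then 1 else 0)
    (A : H →L[ℂ] H) (σ : ℕ → ℂ) :
    (∀ (f : H) (n : ℕ), (inner ℂ (A f) (v n) : ℂ) = σ n * (inner ℂ f (v n) : ℂ)) ↔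
    (∀ (g : H) (n : ℕ),
      (inner ℂ (ContinuousLinearMap.adjoint A g) (u n) : ℂ) =
        (starRingEnd ℂ) (σ n) * (inner ℂ g (u n) : ℂ)) := by
  rw [forall_comm, forall_comm (α := H)]
  simp only [forall_inner_apply_eq_mul_inner_iff, ContinuousLinearMap.adjoint_adjoint]
  exact ⟨apply_eq_conj_smul_of_adjoint_apply_eq_smul hvdense hbiorth,
    adjoint_apply_eq_smul_of_apply_eq_conj_smul hudense hbiorth⟩

/-- Theorem 3.23: let `(u_n)` and `(v_n)` be two biorthogonal Riesz bases of the complex Hilbert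
space `H`, `A` a bounded operator on `H`, and `σ : ℕ → ℂ`. Then `A` is an `𝔏`-Fourier
multiplier by `σ` (i.e. `⟨A f, vₙ⟩ = σ(n) ⟨f, vₙ⟩` for all `f, n`) iff its adjoint `A*` is an
`𝔏*`-Fourier multiplier by `conj σ` (i.e. `⟨A* g, uₙ⟩ = conj(σ(n)) ⟨g, uₙ⟩` for all `g, n`). -/
theorem fourier_multiplier_adjoint
    {H : Type*} [NormedAddCommGroup H] [InnerProductSpace ℂ H] [CompleteSpace H]
    (u v : ℕ → H)
    (cu Cu : ℝ) (hcu : 0 < cu) (hcuCu : cu ≤ Cu)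
    (hudense : Dense (↑(Submodule.span ℂ (Set.range u)) : Set H))
    (hulower : ∀ (s : Finset ℕ) (a : ℕ → ℂ),
      cu * ∑ n ∈ s, ‖a n‖ ^ 2 ≤ ‖∑ n ∈ s, a n • u n‖ ^ 2)
    (huupper : ∀ (s : Finset ℕ) (a : ℕ → ℂ),
      ‖∑ n ∈ s, a n • u n‖ ^ 2 ≤ Cu * ∑ n ∈ s, ‖a n‖ ^ 2)
    (cv Cv : ℝ) (hcv : 0 < cv) (hcvCv : cv ≤ Cv)
    (hvdense : Dense (↑(Submodule.span ℂ (Set.range v)) : Set H))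
    (hvlower : ∀ (s : Finset ℕ) (a : ℕ → ℂ),
      cv * ∑ n ∈ s, ‖a n‖ ^ 2 ≤ ‖∑ n ∈ s, a n • v n‖ ^ 2)
    (hvupper : ∀ (s : Finset ℕ) (a : ℕ → ℂ),
      ‖∑ n ∈ s, a n • v n‖ ^ 2 ≤ Cv * ∑ n ∈ s, ‖a n‖ ^ 2)
    (hbiorth : ∀ m n, (inner ℂ (u m) (v n) : ℂ) = if m = n then 1 else 0)
    (A : H →L[ℂ] H) (σ : ℕ → ℂ) :
    (∀ (f : H) (n : ℕ), (inner ℂ (A f) (v n) : ℂ) = σ n * (inner ℂ f (v n) : ℂ)) ↔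
    (∀ (g : H) (n : ℕ),
      (inner ℂ (ContinuousLinearMap.adjoint A g) (u n) : ℂ) =
        (starRingEnd ℂ) (σ n) * (inner ℂ g (u n) : ℂ)) :=
  fourier_multiplier_adjoint_general u v hudense hvdense hbiorth A σ
end

section
/- Let H be a complex Hilbert space and let (w_n)_{n∈ℕ} ⊂ H be a family for which there exist constants 0 < k ≤ K such that for every square-summable complex sequence (a_n) the series ∑_n a_n w_n converges in H and k ∑_n |a_n|² ≤ ‖∑_n a_n w_n‖² ≤ K ∑_n |a_n|². Let χ : ℕ → ℂ be a sequence whose real parts are uniformly bounded from below: Re χ_n ≥ −C₀ for all n and some C₀ ≥ 0. Then for every square-summable complex sequence (f_n) and every t ≥ 0, the sequence (e^{−χ_n t} f_n)_n is square-summable, the series f_t := ∑_n e^{−χ_n t} f_n w_n converges in H, and ‖f_t‖² ≤ (K/k) e^{2 C₀ t} ‖f₀‖², where f₀ = ∑_n f_n w_n. -/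
open Filter Topology

/-!
The factor `e^{-χₙ t}` has modulus `e^{-t Re χₙ} ≤ e^{C₀ t}`, so it acts on coefficient sequences
as a bounded multiplier on `ℓ²`. The Riesz bounds transfer this to `H`: the upper bound
controls `‖f_t‖²` by `K ∑ |e^{-χₙ t} fₙ|² ≤ K e^{2C₀t} ∑ |fₙ|²`, and the lower bound controls
`∑ |fₙ|²` by `‖f₀‖² / k`.
-/

theorem Complex.norm_exp_neg_mul_ofReal_le {z : ℂ} {c t : ℝ} (hz : -c ≤ z.re) (ht : 0 ≤ t) :
    ‖Complex.exp (-z * t)‖ ≤ Real.exp (c * t) := by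
  rw [Complex.norm_exp, Complex.re_mul_ofReal, Complex.neg_re]
  gcongr
  linarith

section Multiplier

variable {ι R : Type*} [NormedRing R] {m f : ι → R} {M : ℝ}

theorem sq_norm_mul_le_of_norm_le (hm : ∀ i, ‖m i‖ ≤ M) (i : ι) :
    ‖m i * f i‖ ^ 2 ≤ M ^ 2 * ‖f i‖ ^ 2 := by
  rw [← mul_pow]
  gcongr
  exact (norm_mul_le _ _).trans (by gcongr; exact hm i)

theorem summable_sq_norm_mul_of_norm_le (hm : ∀ i, ‖m i‖ ≤ M)
    (hf : Summable fun i => ‖f i‖ ^ 2) : Summable fun i => ‖m i * f i‖ ^ 2 :=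
  .of_nonneg_of_le (fun _ => sq_nonneg _) (sq_norm_mul_le_of_norm_le hm) (hf.mul_left _)

theorem tsum_sq_norm_mul_le_of_norm_le (hm : ∀ i, ‖m i‖ ≤ M)
    (hf : Summable fun i => ‖f i‖ ^ 2) :
    ∑' i, ‖m i * f i‖ ^ 2 ≤ M ^ 2 * ∑' i, ‖f i‖ ^ 2 := by
  rw [← tsum_mul_left]
  exact (summable_sq_norm_mul_of_norm_le hm hf).tsum_le_tsum (sq_norm_mul_le_of_norm_le hm)
    (hf.mul_left _)

end Multiplier

section Riesz

variable {ι H : Type*} [NormedAddCommGroup H] [InnerProductSpace ℂ H] {w : ι → H} {k K : ℝ}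

theorem norm_sq_tsum_smul_mul_le_of_riesz (hk : 0 < k) (hkK : k ≤ K)
    (hw : ∀ a : ι → ℂ, Summable (fun n => ‖a n‖ ^ 2) →
      Summable (fun n => a n • w n) ∧
      k * ∑' n, ‖a n‖ ^ 2 ≤ ‖∑' n, a n • w n‖ ^ 2 ∧
      ‖∑' n, a n • w n‖ ^ 2 ≤ K * ∑' n, ‖a n‖ ^ 2)
    {m f : ι → ℂ} {M : ℝ} (hm : ∀ n, ‖m n‖ ≤ M) (hf : Summable fun n => ‖f n‖ ^ 2) :
    ‖∑' n, (m n * f n) • w n‖ ^ 2 ≤ K / k * M ^ 2 * ‖∑' n, f n • w n‖ ^ 2 := by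
  have hK : 0 ≤ K := hk.le.trans hkK
  have hf_le : ∑' n, ‖f n‖ ^ 2 ≤ ‖∑' n, f n • w n‖ ^ 2 / k :=
    (le_div_iff₀ hk).2 (by rw [mul_comm]; exact (hw f hf).2.1)
  calc ‖∑' n, (m n * f n) • w n‖ ^ 2
      ≤ K * ∑' n, ‖m n * f n‖ ^ 2 := (hw _ (summable_sq_norm_mul_of_norm_le hm hf)).2.2
    _ ≤ K * (M ^ 2 * (‖∑' n, f n • w n‖ ^ 2 / k)) := by
        gcongr
        exact (tsum_sq_norm_mul_le_of_norm_le hm hf).trans (by gcongr)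
    _ = K / k * M ^ 2 * ‖∑' n, f n • w n‖ ^ 2 := by ring

end Riesz

theorem heat_semigroup_stability_general
    {H : Type*} [NormedAddCommGroup H] [InnerProductSpace ℂ H]
    (w : ℕ → H) (k K : ℝ) (hk : 0 < k) (hkK : k ≤ K)
    (hw : ∀ a : ℕ → ℂ, Summable (fun n => ‖a n‖ ^ 2) →
      Summable (fun n => a n • w n) ∧
      k * ∑' n, ‖a n‖ ^ 2 ≤ ‖∑' n, a n • w n‖ ^ 2 ∧
      ‖∑' n, a n • w n‖ ^ 2 ≤ K * ∑' n, ‖a n‖ ^ 2)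
    (χ : ℕ → ℂ) (C₀ : ℝ) (hre : ∀ n, -C₀ ≤ (χ n).re) :
    ∀ f : ℕ → ℂ, Summable (fun n => ‖f n‖ ^ 2) → ∀ t : ℝ, 0 ≤ t →
      Summable (fun n => ‖Complex.exp (-χ n * t) * f n‖ ^ 2) ∧
      Summable (fun n => (Complex.exp (-χ n * t) * f n) • w n) ∧
      ‖∑' n, (Complex.exp (-χ n * t) * f n) • w n‖ ^ 2 ≤
        K / k * Real.exp (2 * C₀ * t) * ‖∑' n, f n • w n‖ ^ 2 := by
  intro f hf t ht
  have hm : ∀ n, ‖Complex.exp (-χ n * t)‖ ≤ Real.exp (C₀ * t) := fun n =>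
    Complex.norm_exp_neg_mul_ofReal_le (hre n) ht
  have hsum := summable_sq_norm_mul_of_norm_le hm hf
  refine ⟨hsum, (hw _ hsum).1, ?_⟩
  convert norm_sq_tsum_smul_mul_le_of_riesz hk hkK hw hm hf using 3
  rw [← Real.exp_nat_mul]
  ring_nf

/-- Hilbert-space form of Proposition 5.19: if `(w_n)` satisfies a two-sided Riesz inequality
`k ∑|aₙ|² ≤ ‖∑ aₙ wₙ‖² ≤ K ∑|aₙ|²` for all `ℓ²` coefficient sequences, and the real parts of
`χ_n` are uniformly bounded from below by `−C₀`, then for every `ℓ²` coefficient sequence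
`(f_n)` and every `t ≥ 0` the sequence `(e^{−χₙ t} fₙ)ₙ` is again in `ℓ²`, the series
`f_t = ∑ₙ e^{−χₙ t} fₙ wₙ` converges in `H`, and `‖f_t‖² ≤ (K/k) e^{2C₀t} ‖f₀‖²`. -/
theorem heat_semigroup_stability
    {H : Type*} [NormedAddCommGroup H] [InnerProductSpace ℂ H] [CompleteSpace H]
    (w : ℕ → H) (k K : ℝ) (hk : 0 < k) (hkK : k ≤ K)
    (hw : ∀ a : ℕ → ℂ, Summable (fun n => ‖a n‖ ^ 2) →
      Summable (fun n => a n • w n) ∧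
      k * ∑' n, ‖a n‖ ^ 2 ≤ ‖∑' n, a n • w n‖ ^ 2 ∧
      ‖∑' n, a n • w n‖ ^ 2 ≤ K * ∑' n, ‖a n‖ ^ 2)
    (χ : ℕ → ℂ) (C₀ : ℝ) (hC₀ : 0 ≤ C₀) (hre : ∀ n, -C₀ ≤ (χ n).re) :
    ∀ f : ℕ → ℂ, Summable (fun n => ‖f n‖ ^ 2) → ∀ t : ℝ, 0 ≤ t →
      Summable (fun n => ‖Complex.exp (-χ n * t) * f n‖ ^ 2) ∧
      Summable (fun n => (Complex.exp (-χ n * t) * f n) • w n) ∧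
      ‖∑' n, (Complex.exp (-χ n * t) * f n) • w n‖ ^ 2 ≤
        K / k * Real.exp (2 * C₀ * t) * ‖∑' n, f n • w n‖ ^ 2 :=
  heat_semigroup_stability_general w k K hk hkK hw χ C₀ hre
end
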